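/- For p = 3, s = 1: for every integer n ≥ 1 and every integer b with 0 ≤ b < 3(n+1) and b ≡ 1 or 2 (mod 3), one has M_{3,1,n}(b) < 0. -/

import Mathlib

open Polynomial Finset

/-- The polynomial `T_{p,s,n}(q) = ∏_{j=0}^n ∏_{k=1}^{p-1} (1 - q^{pj+k})^s`. -/
noncomputable def borweinPoly (p s n : ℕ) : Polynomial ℤ :=
  ∏ j ∈ Finset.range (n + 1), ∏ k ∈ Finset.Icc 1 (p - 1),
    (1 - Polynomial.X ^ (p * j + k)) ^ s

/-- The coefficient `t_{i,p,s}` of `q^i` in `T_{p,s,n}(q)`. -/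
noncomputable def borweinCoeff (p s n i : ℕ) : ℤ := (borweinPoly p s n).coeff i

/-- The degree `d_{p,s,n} = p(p-1)s(n+1)^2/2` of `T_{p,s,n}`. -/
def borweinDeg (p s n : ℕ) : ℕ := p * (p - 1) * s * (n + 1) ^ 2 / 2

/-- `M_{p,s,n}(b) = ∑_{ℓ ≥ 0} t_{b + ℓ·p(n+1), p, s}`, a finite sum since the
coefficients vanish beyond the degree `d_{p,s,n}`. -/
noncomputable def borweinM (p s n b : ℕ) : ℤ :=
  ∑ l ∈ Finset.range (borweinDeg p s n + 1), borweinCoeff p s n (b + l * (p * (n + 1)))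

/-!
Let `N = 3(n+1)` and let `ζ` be a primitive `N`-th root of unity. The roots-of-unity filter
gives `N · M(b) = ∑_{t < N} ζ^{-tb} T(ζ^t)`. If `g = gcd(N, t)`, then `ζ^t` has order `N / g`,
so `T(ζ^t)` vanishes unless `3 ∣ N / g`, i.e. `g ∣ n+1`; in that case `T(ζ^t) = 3^g`, since over
one period the factors `1 - x^k` with `3 ∤ k` multiply to `(1 - ω)(1 - ω²) = 3`, `ω` a primitive
cube root of unity. The two terms with `g = n+1` (`t = n+1, 2(n+1)`) add up to
`3^(n+1) (η + η²) = -3^(n+1)` for a primitive cube root of unity `η`, because `3 ∤ b`. Every other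
nonzero term has `g` a proper divisor of `n+1`; there are `φ(N / g)` such `t` for each `g`, and
`∑ φ(N / g) 3^g < 3^(n+1)`. Hence `N · M(b) < 0`.
-/

theorem Finset.sum_range_mul_eq_sum_sum {M : Type*} [AddCommMonoid M] (f : ℕ → M) (a b : ℕ) :
    ∑ i ∈ range (a * b), f i = ∑ l ∈ range a, ∑ r ∈ range b, f (l * b + r) := by
  induction a with
  | zero => simp
  | succ a ih => rw [Nat.succ_mul, sum_range_add, ih, sum_range_succ]

theorem Nat.sum_range_filter_gcd_mem {M : Type*} [AddCommMonoid M] (N : ℕ) {D : Finset ℕ}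
    (hD : ∀ g ∈ D, g ∣ N) (f : ℕ → M) :
    ∑ t ∈ range N with N.gcd t ∈ D, f (N.gcd t) = ∑ g ∈ D, Nat.totient (N / g) • f g := by
  rw [← sum_fiberwise_of_maps_to (t := D) (g := N.gcd) fun t ht => (mem_filter.1 ht).2]
  refine sum_congr rfl fun g hg => ?_
  have hfiber :
      {t ∈ range N | N.gcd t ∈ D}.filter (N.gcd · = g) = {t ∈ range N | N.gcd t = g} := by
    ext t
    simp only [mem_filter, and_assoc]
    exact ⟨fun ⟨ht, _, hgt⟩ => ⟨ht, hgt⟩, fun ⟨ht, hgt⟩ => ⟨ht, hgt ▸ hg, hgt⟩⟩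
  rw [hfiber, sum_congr rfl fun t ht => by rw [(mem_filter.1 ht).2], sum_const,
    Nat.totient_div_of_dvd (hD g hg)]

theorem three_mul_le_two_mul_three_pow {m : ℕ} (hm : 5 ≤ m) :
    3 * m ≤ 2 * 3 ^ ((m - 1) / 2) := by
  induction m using Nat.strong_induction_on with
  | _ m ih =>
    rcases lt_or_ge m 7 with h | h
    · interval_cases m <;> norm_num
    · have := ih (m - 2) (by omega) (by omega)
      rw [show (m - 1) / 2 = (m - 2 - 1) / 2 + 1 by omega, pow_succ]
      omega

theorem sum_properDivisors_totient_mul_pow_lt {m : ℕ} (hm : 0 < m) :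
    ∑ g ∈ m.properDivisors, Nat.totient (3 * m / g) * 3 ^ g < 3 ^ m := by
  rcases lt_or_ge m 5 with hm5 | hm5
  · interval_cases m <;> decide
  -- the crude bounds `φ ≤ 3m` and `g ≤ m / 2` used below only suffice from `m = 5` on
  set K := m / 2
  have hsub : m.properDivisors ⊆ range (K + 1) := fun g hg => by
    obtain ⟨⟨c, hc⟩, hlt⟩ := Nat.mem_properDivisors.1 hg
    have : 2 ≤ c := by
      rcases Nat.lt_or_ge c 2 with h | h
      · interval_cases c <;> omega
      · exact h
    rw [mem_range, Nat.lt_succ_iff, Nat.le_div_iff_mul_le two_pos, hc]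
    exact Nat.mul_le_mul_left g this
  have hterm (g : ℕ) : Nat.totient (3 * m / g) * 3 ^ g ≤ 3 * m * 3 ^ g :=
    Nat.mul_le_mul_right _ ((Nat.totient_le _).trans (Nat.div_le_self _ _))
  have hgeom : (∑ g ∈ range (K + 1), 3 ^ g) * 2 + 1 = 3 ^ (K + 1) := geom_sum_mul_add 2 (K + 1)
  have hpow : 3 ^ (K + 1) * 3 ^ ((m - 1) / 2) = 3 ^ m := by
    rw [← pow_add]
    congr 1
    omega
  have hlin := three_mul_le_two_mul_three_pow hm5
  calc ∑ g ∈ m.properDivisors, Nat.totient (3 * m / g) * 3 ^ g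
      ≤ ∑ g ∈ range (K + 1), 3 * m * 3 ^ g :=
        (sum_le_sum fun g _ => hterm g).trans (sum_le_sum_of_subset hsub)
    _ < 3 ^ m := by
        rw [← mul_sum]
        nlinarith [Nat.mul_le_mul_right (3 ^ (K + 1)) hlin]

namespace IsPrimitiveRoot

variable {R : Type*} [CommRing R] [IsDomain R]

theorem sum_range_pow_mul {ζ : R} {N : ℕ} (hζ : IsPrimitiveRoot ζ N) (a : ℕ) :
    ∑ t ∈ range N, ζ ^ (t * a) = if N ∣ a then (N : R) else 0 := by
  simp_rw [mul_comm _ a, pow_mul]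
  split_ifs with h
  · simp [(hζ.pow_eq_one_iff_dvd a).2 h]
  · have hne : ζ ^ a - 1 ≠ 0 := sub_ne_zero.2 fun h1 => h ((hζ.pow_eq_one_iff_dvd a).1 h1)
    have hgeom := geom_sum_mul (ζ ^ a) N
    rw [← pow_mul, mul_comm a N, pow_mul, hζ.pow_eq_one, one_pow, sub_self] at hgeom
    exact (mul_eq_zero.1 hgeom).resolve_right hne

/-- The roots-of-unity filter; `ζ ^ (t * (N - b))` stands for `ζ ^ (-t * b)`. -/
theorem sum_pow_mul_eval_pow {ζ : R} {N b L : ℕ} (hζ : IsPrimitiveRoot ζ N) (hb : b < N)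
    {P : R[X]} (hP : P.natDegree < L) :
    ∑ t ∈ range N, ζ ^ (t * (N - b)) * P.eval (ζ ^ t) =
      N * ∑ l ∈ range L, P.coeff (b + l * N) := by
  have hPL : P.natDegree < L * N := hP.trans_le (Nat.le_mul_of_pos_right L (by omega))
  have hpow (t l r : ℕ) :
      ζ ^ (t * (N - b)) * ζ ^ (t * (l * N + r)) = ζ ^ (t * (N - b + r)) := by
    rw [← pow_add, show t * (N - b) + t * (l * N + r) = t * (N - b + r) + N * (t * l) by ring,
      pow_add, pow_mul ζ N, hζ.pow_eq_one, one_pow, mul_one]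
  have hdvd {r : ℕ} (hr : r < N) : N ∣ N - b + r ↔ r = b := by
    refine ⟨fun h => ?_, fun h => ⟨1, by omega⟩⟩
    have := Nat.eq_of_dvd_of_lt_two_mul (by omega) h (by omega)
    omega
  calc ∑ t ∈ range N, ζ ^ (t * (N - b)) * P.eval (ζ ^ t)
      = ∑ l ∈ range L, ∑ r ∈ range N,
          P.coeff (l * N + r) * ∑ t ∈ range N, ζ ^ (t * (N - b + r)) := by
        simp_rw [eval_eq_sum_range' hPL, sum_range_mul_eq_sum_sum, mul_sum, ← pow_mul,
          mul_left_comm _ (P.coeff _), hpow]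
        rw [sum_comm]
        exact sum_congr rfl fun l _ => sum_comm
    _ = N * ∑ l ∈ range L, P.coeff (b + l * N) := by
        simp_rw [hζ.sum_range_pow_mul, mul_sum]
        refine sum_congr rfl fun l _ => ?_
        rw [sum_congr rfl fun r hr => by rw [if_congr (hdvd (mem_range.1 hr)) rfl rfl]]
        simp only [mul_ite, mul_zero, sum_ite_eq', mem_range, hb, if_true]
        rw [mul_comm, add_comm]

theorem prod_one_sub_pow_mul {u : R} {e : ℕ} (hu : IsPrimitiveRoot u e) (he : 0 < e) (z : R) :
    ∏ j ∈ range e, (1 - u ^ j * z) = 1 - z ^ e := by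
  simpa [eval_prod] using
    congrArg (eval 1) (X_pow_sub_C_eq_prod hu he (rfl : z ^ e = z ^ e)).symm

theorem add_sq_eq_neg_one {ω : R} (hω : IsPrimitiveRoot ω 3) : ω + ω ^ 2 = -1 := by
  have h := hω.geom_sum_eq_zero (by norm_num)
  simp only [sum_range_succ, range_zero, sum_empty, pow_zero, pow_one] at h
  linear_combination h

end IsPrimitiveRoot

theorem borweinPoly_three_one (n : ℕ) :
    borweinPoly 3 1 n = ∏ j ∈ range (n + 1), (1 - X ^ (3 * j + 1)) * (1 - X ^ (3 * j + 2)) := by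
  refine prod_congr rfl fun j _ => ?_
  rw [show Icc 1 (3 - 1) = {1, 2} from rfl, prod_pair (by norm_num), pow_one, pow_one]

theorem natDegree_borweinPoly_three_one_le (n : ℕ) :
    (borweinPoly 3 1 n).natDegree ≤ 3 * (n + 1) ^ 2 := by
  have hfactor (k : ℕ) : ((1 : ℤ[X]) - X ^ k).natDegree ≤ k :=
    (natDegree_sub_le _ _).trans (by simp)
  rw [borweinPoly_three_one]
  calc _ ≤ ∑ j ∈ range (n + 1), (6 * j + 3) :=
        (natDegree_prod_le _ _).trans <| sum_le_sum fun j _ =>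
          natDegree_mul_le.trans (by linarith [hfactor (3 * j + 1), hfactor (3 * j + 2)])
    _ = 3 * (n + 1) ^ 2 := by
        induction n with
        | zero => simp
        | succ n ih => rw [sum_range_succ, ih]; ring

theorem aeval_borweinPoly_three_one {A : Type*} [CommRing A] (x : A) (n : ℕ) :
    aeval x (borweinPoly 3 1 n) =
      ∏ j ∈ range (n + 1), (1 - x ^ (3 * j + 1)) * (1 - x ^ (3 * j + 2)) := by
  simp [borweinPoly_three_one]

theorem aeval_borweinPoly_three_one_eq_zero {A : Type*} [CommRing A] {x : A} {d n : ℕ}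
    (hx : x ^ d = 1) (hd : ¬ 3 ∣ d) (hdn : d < 3 * (n + 1)) :
    aeval x (borweinPoly 3 1 n) = 0 := by
  rw [aeval_borweinPoly_three_one]
  refine prod_eq_zero (mem_range.2 (show d / 3 < n + 1 by omega)) ?_
  rcases (by omega : d % 3 = 1 ∨ d % 3 = 2) with h | h
  · rw [show 3 * (d / 3) + 1 = d by omega, hx, sub_self, zero_mul]
  · rw [show 3 * (d / 3) + 2 = d by omega, hx, sub_self, mul_zero]

/-- The value of `T_{3,1,n}` at `ζ ^ t` for a primitive `3m`-th root of unity `ζ`, `m = n + 1`. -/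
def borweinValue (m t : ℕ) : ℕ := if (3 * m).gcd t ∣ m then 3 ^ (3 * m).gcd t else 0

theorem filter_gcd_three_mul_eq {m : ℕ} (hm : 0 < m) :
    {t ∈ range (3 * m) | (3 * m).gcd t = m} = {m, 2 * m} := by
  ext t
  simp only [mem_filter, mem_range, mem_insert, mem_singleton]
  constructor
  · rintro ⟨ht, hgcd⟩
    obtain ⟨c, rfl⟩ : m ∣ t := hgcd ▸ Nat.gcd_dvd_right _ _
    have hc : c < 3 := lt_of_mul_lt_mul_left (by linarith) (Nat.zero_le m)
    interval_cases c
    · simp at hgcd; omega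
    · simp
    · simp [mul_comm]
  · rintro (rfl | rfl)
    · exact ⟨by omega, Nat.gcd_eq_right (dvd_mul_left t 3)⟩
    · refine ⟨by omega, ?_⟩
      rw [Nat.gcd_mul_right 3 m 2]
      simp

namespace IsPrimitiveRoot

variable {R : Type*} [CommRing R] [IsDomain R]

theorem aeval_borweinPoly_three_one {x : R} {e g n : ℕ} (hx : IsPrimitiveRoot x (3 * e))
    (he : 0 < e) (hn : e * g = n + 1) : aeval x (borweinPoly 3 1 n) = 3 ^ g := by
  set f : ℕ → R := fun j => (1 - x ^ (3 * j + 1)) * (1 - x ^ (3 * j + 2))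
  have hper (l r : ℕ) : f (e * l + r) = f r := by
    have hpow (k : ℕ) : x ^ (3 * (e * l + r) + k) = x ^ (3 * r + k) := by
      rw [show 3 * (e * l + r) + k = 3 * e * l + (3 * r + k) by ring, pow_add, pow_mul,
        hx.pow_eq_one, one_pow, one_mul]
    simp only [f, hpow]
  have hblock : ∏ j ∈ range e, f j = 3 := by
    have hu : IsPrimitiveRoot (x ^ 3) e := hx.pow (by omega) rfl
    have hω : IsPrimitiveRoot (x ^ e) 3 := hx.pow (by omega) (mul_comm 3 e)
    calc ∏ j ∈ range e, f j
        = (∏ j ∈ range e, (1 - (x ^ 3) ^ j * x)) *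
            ∏ j ∈ range e, (1 - (x ^ 3) ^ j * x ^ 2) := by
          rw [← prod_mul_distrib]
          refine prod_congr rfl fun j _ => ?_
          simp only [f]
          ring
      _ = (1 - x ^ e) * (1 - (x ^ e) ^ 2) := by
          rw [hu.prod_one_sub_pow_mul he, hu.prod_one_sub_pow_mul he]
          ring
      _ = 3 := by linear_combination hω.pow_eq_one - hω.add_sq_eq_neg_one
  rw [_root_.aeval_borweinPoly_three_one, ← hn]
  change ∏ j ∈ range (e * g), f j = 3 ^ g
  clear hn
  induction g with
  | zero => simp
  | succ g ih => rw [mul_add_one, prod_range_add, ih, pow_succ]; simp only [hper, hblock]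

theorem aeval_borweinPoly_three_one_pow {ζ : R} {n : ℕ} (hζ : IsPrimitiveRoot ζ (3 * (n + 1)))
    (t : ℕ) : aeval (ζ ^ t) (borweinPoly 3 1 n) = borweinValue (n + 1) t := by
  have hx : IsPrimitiveRoot (ζ ^ t) (3 * (n + 1) / (3 * (n + 1)).gcd t) := by
    have h := IsPrimitiveRoot.orderOf (ζ ^ t)
    rwa [IsOfFinOrder.orderOf_pow _ _ (hζ.isOfFinOrder (by omega)), ← hζ.eq_orderOf] at h
  have hgN : (3 * (n + 1)).gcd t ∣ 3 * (n + 1) := Nat.gcd_dvd_left _ _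
  unfold borweinValue
  generalize (3 * (n + 1)).gcd t = g at hx hgN ⊢
  have hg : 0 < g := Nat.pos_of_ne_zero (by rintro rfl; simp at hgN)
  split_ifs with h
  · obtain ⟨e, he⟩ := h
    rw [he, show 3 * (g * e) = 3 * e * g by ring, Nat.mul_div_cancel _ hg] at hx
    push_cast
    exact hx.aeval_borweinPoly_three_one (Nat.pos_of_ne_zero (by rintro rfl; omega))
      (by rw [he, mul_comm])
  · have hg1 : g ≠ 1 := by rintro rfl; exact h (one_dvd _)
    have hdvd : ¬ 3 ∣ 3 * (n + 1) / g := by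
      rintro ⟨c, hc⟩
      exact h ⟨c, by have := Nat.div_mul_cancel hgN; rw [hc] at this; linarith⟩
    rw [Nat.cast_zero]
    exact aeval_borweinPoly_three_one_eq_zero hx.pow_eq_one hdvd
      (Nat.div_lt_self (by omega) (by omega))

theorem sum_filter_gcd_eq_pow_mul_borweinValue {ζ : R} {m c : ℕ}
    (hζ : IsPrimitiveRoot ζ (3 * m)) (hm : 0 < m) (hc : ¬ 3 ∣ c) :
    ∑ t ∈ range (3 * m) with (3 * m).gcd t = m, ζ ^ (t * c) * borweinValue m t = -3 ^ m := by
  have hvalue : ∀ t ∈ {t ∈ range (3 * m) | (3 * m).gcd t = m}, (borweinValue m t : R) = 3 ^ m :=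
    fun t ht => by simp [borweinValue, (mem_filter.1 ht).2]
  have hη : IsPrimitiveRoot ((ζ ^ m) ^ c) 3 :=
    (hζ.pow (by omega) (mul_comm 3 m)).pow_of_coprime c
      ((Nat.Prime.coprime_iff_not_dvd Nat.prime_three).2 hc).symm
  rw [← pow_mul] at hη
  rw [sum_congr rfl fun t ht => by rw [hvalue t ht], filter_gcd_three_mul_eq hm,
    sum_pair (by omega), show 2 * m * c = m * c * 2 by ring, pow_mul ζ (m * c) 2]
  linear_combination (3 : R) ^ m * hη.add_sq_eq_neg_one

end IsPrimitiveRoot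

theorem sum_filter_gcd_ne_borweinValue_lt {m : ℕ} (hm : 0 < m) :
    ∑ t ∈ range (3 * m) with (3 * m).gcd t ≠ m, borweinValue m t < 3 ^ m := by
  have hfilter : ∑ t ∈ range (3 * m) with (3 * m).gcd t ≠ m, borweinValue m t =
      ∑ t ∈ range (3 * m) with (3 * m).gcd t ∈ m.properDivisors, 3 ^ (3 * m).gcd t := by
    rw [sum_filter, sum_filter]
    refine sum_congr rfl fun t _ => ?_
    by_cases h : (3 * m).gcd t ∣ m
    · have := Nat.le_of_dvd hm h
      simp [borweinValue, Nat.mem_properDivisors, h, lt_iff_le_and_ne, this]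
    · simp [borweinValue, Nat.mem_properDivisors, h]
  rw [hfilter, Nat.sum_range_filter_gcd_mem _
    (fun g hg => (Nat.mem_properDivisors.1 hg).1.trans (dvd_mul_left m 3))]
  exact sum_properDivisors_totient_mul_pow_lt hm

theorem IsPrimitiveRoot.norm_sum_filter_gcd_ne_pow_mul_borweinValue_lt {ζ : ℂ} {m : ℕ}
    (hζ : IsPrimitiveRoot ζ (3 * m)) (hm : 0 < m) (c : ℕ) :
    ‖∑ t ∈ range (3 * m) with (3 * m).gcd t ≠ m, ζ ^ (t * c) * borweinValue m t‖ < 3 ^ m := by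
  have hζ1 : ‖ζ‖ = 1 := hζ.norm'_eq_one (by omega)
  calc _ ≤ ∑ t ∈ range (3 * m) with (3 * m).gcd t ≠ m, ‖ζ ^ (t * c) * borweinValue m t‖ :=
        norm_sum_le _ _
    _ = ((∑ t ∈ range (3 * m) with (3 * m).gcd t ≠ m, borweinValue m t : ℕ) : ℝ) := by
        push_cast
        simp [hζ1]
    _ < 3 ^ m := by exact_mod_cast sum_filter_gcd_ne_borweinValue_lt hm

theorem IsPrimitiveRoot.mul_borweinM_three_one {ζ : ℂ} {n b : ℕ}
    (hζ : IsPrimitiveRoot ζ (3 * (n + 1))) (hb : b < 3 * (n + 1)) :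
    (3 * (n + 1) : ℂ) * borweinM 3 1 n b =
      ∑ t ∈ range (3 * (n + 1)), ζ ^ (t * (3 * (n + 1) - b)) * borweinValue (n + 1) t := by
  have hdeg : borweinDeg 3 1 n = 3 * (n + 1) ^ 2 := by
    simp only [borweinDeg]
    omega
  have hP : ((borweinPoly 3 1 n).map (algebraMap ℤ ℂ)).natDegree < borweinDeg 3 1 n + 1 :=
    Nat.lt_succ_of_le (natDegree_map_le.trans (hdeg ▸ natDegree_borweinPoly_three_one_le n))
  simp_rw [← hζ.aeval_borweinPoly_three_one_pow, ← eval_map_algebraMap,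
    hζ.sum_pow_mul_eval_pow hb hP, coeff_map, borweinM, borweinCoeff]
  push_cast
  rfl

theorem stmt_3_general (n b : ℕ) (hb : b < 3 * (n + 1))
    (hbmod : b % 3 = 1 ∨ b % 3 = 2) :
    borweinM 3 1 n b < 0 := by
  obtain ⟨ζ, hζ⟩ : ∃ ζ : ℂ, IsPrimitiveRoot ζ (3 * (n + 1)) :=
    ⟨_, Complex.isPrimitiveRoot_exp _ (by omega)⟩
  have hc : ¬ 3 ∣ 3 * (n + 1) - b := by omega
  have hsum := hζ.mul_borweinM_three_one hb
  rw [← sum_filter_add_sum_filter_not _ (fun t => (3 * (n + 1)).gcd t = n + 1),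
    hζ.sum_filter_gcd_eq_pow_mul_borweinValue (by omega) hc] at hsum
  simp only [← ne_eq] at hsum
  have herr := hζ.norm_sum_filter_gcd_ne_pow_mul_borweinValue_lt (by omega) (3 * (n + 1) - b)
  rw [← eq_neg_add_iff_add_eq.1 hsum] at herr
  have hbound : |3 ^ (n + 1) + 3 * (n + 1) * borweinM 3 1 n b| < 3 ^ (n + 1) := by
    have hnorm := Complex.norm_intCast (3 ^ (n + 1) + 3 * (n + 1) * borweinM 3 1 n b)
    push_cast at hnorm
    rw [hnorm] at herr
    exact_mod_cast herr
  have hneg : (3 * (n + 1) : ℤ) * borweinM 3 1 n b < 0 := by linarith [(abs_lt.1 hbound).2]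
  exact Left.neg_of_mul_neg_right hneg (by positivity)

theorem stmt_3 (n b : ℕ) (hn : 1 ≤ n) (hb : b < 3 * (n + 1))
    (hbmod : b % 3 = 1 ∨ b % 3 = 2) :
    borweinM 3 1 n b < 0 :=
  stmt_3_general n b hb hbmod
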